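/- arXiv:2205.00690 — 2 statements merged into one kernel-verified Lean document; each statement's English description precedes it below -/
import Mathlib

section
/- For all real numbers α > 0 and β > 0, the function a ↦ Γ(a) / β^a (where Γ is the real Gamma function) is differentiable at α, and its derivative at α equals ∫_{0}^{∞} x^{α−1} e^{−βx} log x dx; moreover this derivative also equals β^{−α} · (Γ'(α) − Γ(α) · log β), where Γ'(α) denotes the derivative of the real Gamma function at α. -/
open MeasureTheory Set Real Filter

-- Step A: derivative of real Gamma as an integral
lemma gamma_hasDerivAt {α : ℝ} (hα : 0 < α) :
    HasDerivAt Real.Gamma (∫ t in Set.Ioi (0:ℝ), t ^ (α - 1) * Real.exp (-t) * Real.log t) α := by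
  have h1 : HasDerivAt Complex.GammaIntegral
      (∫ t in Set.Ioi (0:ℝ), (t:ℂ) ^ ((α:ℂ) - 1) * (Real.log t * Real.exp (-t))) (α:ℂ) :=
    Complex.hasDerivAt_GammaIntegral (by simpa using hα)
  have heq : Complex.Gamma =ᶠ[nhds (α:ℂ)] Complex.GammaIntegral := by
    have hopen : IsOpen {s : ℂ | 0 < s.re} := isOpen_lt continuous_const Complex.continuous_re
    filter_upwards [hopen.mem_nhds (by simpa using hα)] with s hs
    exact Complex.Gamma_eq_integral hs
  have h2 := h1.congr_of_eventuallyEq heq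
  have h3 := h2.real_of_complex
  have hd : (∫ t in Set.Ioi (0:ℝ), (t:ℂ) ^ ((α:ℂ) - 1) * (Real.log t * Real.exp (-t)))
      = ((∫ t in Set.Ioi (0:ℝ), t ^ (α - 1) * Real.exp (-t) * Real.log t : ℝ) : ℂ) := by
    refine (setIntegral_congr_fun measurableSet_Ioi fun t ht => ?_).trans integral_ofReal
    rw [show ((α:ℂ) - 1) = ((α - 1 : ℝ) : ℂ) by push_cast; ring,
      ← Complex.ofReal_cpow (le_of_lt ht)]
    push_cast
    rw [← Complex.ofReal_neg, ← Complex.ofReal_exp]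
    norm_cast
    norm_num [mul_comm, mul_assoc, mul_left_comm]
  rw [hd] at h3
  have h4 := (by simpa using h3 : HasDerivAt (fun x : ℝ => (Complex.Gamma (x:ℂ)).re) (∫ t in Set.Ioi (0:ℝ), t ^ (α - 1) * Real.exp (-t) * Real.log t) α)
  exact h4.congr_of_eventuallyEq (Eventually.of_forall fun x => by simp [Real.Gamma])

-- Step B: integrability of the log-weighted Gamma integrand
lemma integrableOn_gamma_log {α : ℝ} (hα : 0 < α) :
    IntegrableOn (fun t : ℝ => t ^ (α - 1) * Real.exp (-t) * Real.log t) (Set.Ioi 0) := by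
  set δ : ℝ := α / 2 with hδdef
  have hδ : 0 < δ := by positivity
  have hg : IntegrableOn
      (fun t : ℝ => δ⁻¹ * (Real.exp (-t) * t ^ (α + δ - 1) + Real.exp (-t) * t ^ (δ - 1)))
      (Set.Ioi 0) := by
    exact ((Real.GammaIntegral_convergent (by positivity)).add
      (Real.GammaIntegral_convergent hδ)).const_mul _
  refine hg.mono' ?_ ?_
  · refine (ContinuousOn.mul (ContinuousOn.mul ?_ ?_) ?_).aestronglyMeasurable measurableSet_Ioi
    · exact fun t ht => (Real.continuousAt_rpow_const t _ (Or.inl (ne_of_gt ht))).continuousWithinAt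
    · exact (Real.continuous_exp.comp continuous_neg).continuousOn
    · exact fun t ht => (Real.continuousAt_log (ne_of_gt ht)).continuousWithinAt
  · rw [ae_restrict_iff' measurableSet_Ioi]
    refine ae_of_all _ fun t ht => ?_
    have ht0 : (0:ℝ) < t := ht
    have hlog : |Real.log t| ≤ δ⁻¹ * (t ^ δ + t ^ (-δ)) := by
      rcases le_or_gt 1 t with h1 | h1
      · rw [abs_of_nonneg (Real.log_nonneg h1)]
        have := Real.log_le_rpow_div (le_of_lt ht0) hδ
        have hpos : 0 ≤ t ^ (-δ) := Real.rpow_nonneg ht0.le _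
        rw [div_eq_inv_mul] at this
        nlinarith [Real.rpow_nonneg ht0.le δ, inv_pos.mpr hδ]
      · rw [abs_of_nonpos (Real.log_nonpos ht0.le h1.le)]
        have := Real.log_le_rpow_div (inv_nonneg.mpr ht0.le) hδ
        rw [Real.log_inv, Real.inv_rpow ht0.le, ← Real.rpow_neg ht0.le, div_eq_inv_mul] at this
        nlinarith [Real.rpow_nonneg ht0.le δ, inv_pos.mpr hδ]
    have hnn : (0:ℝ) ≤ t ^ (α - 1) * Real.exp (-t) := by positivity
    calc ‖t ^ (α - 1) * Real.exp (-t) * Real.log t‖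
        = t ^ (α - 1) * Real.exp (-t) * |Real.log t| := by
          rw [norm_eq_abs, abs_mul, abs_of_nonneg hnn]
      _ ≤ t ^ (α - 1) * Real.exp (-t) * (δ⁻¹ * (t ^ δ + t ^ (-δ))) := by
          exact mul_le_mul_of_nonneg_left hlog hnn
      _ = δ⁻¹ * (Real.exp (-t) * (t ^ (α - 1) * t ^ δ) + Real.exp (-t) * (t ^ (α - 1) * t ^ (-δ))) := by
          ring
      _ = δ⁻¹ * (Real.exp (-t) * t ^ (α + δ - 1) + Real.exp (-t) * t ^ (δ - 1)) := by
          rw [← Real.rpow_add ht0, ← Real.rpow_add ht0]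
          rw [show α - 1 + -δ = δ - 1 by rw [hδdef]; ring]
          ring_nf



/-- For `α > 0` and `β > 0`, the map `a ↦ Γ(a) / β ^ a` is differentiable at `α` with
derivative `∫_{0}^{∞} x^(α-1) e^(-βx) log x dx`, and this derivative equals
`β^(-α) (Γ'(α) - Γ(α) log β)`. -/
theorem deriv_gamma_div_rpow (α β : ℝ) (hα : 0 < α) (hβ : 0 < β) :
    HasDerivAt (fun a : ℝ => Real.Gamma a / β ^ a)
      (∫ x in Set.Ioi (0 : ℝ), x ^ (α - 1) * Real.exp (-(β * x)) * Real.log x) α ∧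
    (∫ x in Set.Ioi (0 : ℝ), x ^ (α - 1) * Real.exp (-(β * x)) * Real.log x) =
      β ^ (-α) * (deriv Real.Gamma α - Real.Gamma α * Real.log β) := by
  set G' : ℝ := ∫ t in Set.Ioi (0:ℝ), t ^ (α - 1) * Real.exp (-t) * Real.log t with hG'
  have hΓ : HasDerivAt Real.Gamma G' α := gamma_hasDerivAt hα
  have hderiv : deriv Real.Gamma α = G' := hΓ.deriv
  -- substitution t = β x
  set g : ℝ → ℝ := fun t => t ^ (α - 1) * Real.exp (-t) * (Real.log t - Real.log β) with hg
  have hsub : (∫ x in Set.Ioi (0:ℝ), g (β * x)) = β⁻¹ * ∫ t in Set.Ioi (0:ℝ), g t := by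
    simpa using integral_comp_mul_left_Ioi g 0 hβ
  have hint1 : IntegrableOn (fun t : ℝ => t ^ (α - 1) * Real.exp (-t) * Real.log t)
      (Set.Ioi 0) := integrableOn_gamma_log hα
  have hint2 : IntegrableOn (fun t : ℝ => t ^ (α - 1) * Real.exp (-t) * Real.log β)
      (Set.Ioi 0) := by
    have h : IntegrableOn (fun x : ℝ => Real.exp (-x) * x ^ (α - 1) * Real.log β) (Set.Ioi 0) :=
      (Real.GammaIntegral_convergent hα).mul_const (Real.log β)
    exact h.congr_fun (fun t ht => by ring) measurableSet_Ioi
  have hginteq : (∫ t in Set.Ioi (0:ℝ), g t) = G' - Real.Gamma α * Real.log β := by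
    have hsplit : (∫ t in Set.Ioi (0:ℝ), g t)
        = (∫ t in Set.Ioi (0:ℝ), t ^ (α - 1) * Real.exp (-t) * Real.log t)
          - ∫ t in Set.Ioi (0:ℝ), t ^ (α - 1) * Real.exp (-t) * Real.log β := by
      rw [← integral_sub hint1 hint2]
      exact setIntegral_congr_fun measurableSet_Ioi fun t ht => by simp [hg]; ring
    rw [hsplit, ← hG']
    congr 1
    rw [Real.Gamma_eq_integral hα, ← integral_mul_const]
    exact setIntegral_congr_fun measurableSet_Ioi fun t ht => by ring
  have hchange : (∫ x in Set.Ioi (0:ℝ), x ^ (α - 1) * Real.exp (-(β * x)) * Real.log x)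
      = β ^ (1 - α) * ∫ x in Set.Ioi (0:ℝ), g (β * x) := by
    rw [← integral_const_mul]
    refine setIntegral_congr_fun measurableSet_Ioi fun x hx => ?_
    have hx0 : (0:ℝ) < x := hx
    simp only [hg]
    rw [Real.mul_rpow hβ.le hx0.le, Real.log_mul (ne_of_gt hβ) (ne_of_gt hx0)]
    have : β ^ (1 - α) * β ^ (α - 1) = 1 := by
      rw [← Real.rpow_add hβ]; norm_num
    linear_combination (-(x ^ (α - 1) * Real.exp (-(β * x)) * Real.log x)) * this
  have key : (∫ x in Set.Ioi (0:ℝ), x ^ (α - 1) * Real.exp (-(β * x)) * Real.log x)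
      = β ^ (-α) * (G' - Real.Gamma α * Real.log β) := by
    rw [hchange, hsub, hginteq]
    have : β ^ (1 - α) * β⁻¹ = β ^ (-α) := by
      rw [← Real.rpow_neg_one β, ← Real.rpow_add hβ]; congr 1; ring
    rw [← mul_assoc, this]
  refine ⟨?_, by rw [key, hderiv]⟩
  have hb : HasDerivAt (fun a : ℝ => β ^ a) (β ^ α * Real.log β) α :=
    (Real.hasStrictDerivAt_const_rpow hβ α).hasDerivAt
  have hbne : β ^ α ≠ 0 := ne_of_gt (Real.rpow_pos_of_pos hβ α)
  have := hΓ.div hb hbne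
  refine HasDerivAt.congr_deriv this ?_
  rw [key, Real.rpow_neg hβ.le]
  field_simp
end

section
/- Let α̂ > 0, α > 0 and β > 0 be real numbers, and let f_{α̂} and f_{α} denote the probability densities of the Gamma(α̂, β) and Gamma(α, β) distributions respectively. Then the Kullback–Leibler divergence from Gamma(α̂, β) to Gamma(α, β) satisfies ∫_{0}^{∞} f_{α̂}(x) · log( f_{α̂}(x) / f_{α}(x) ) dx = log Γ(α) − log Γ(α̂) + (α̂ − α) · Γ'(α̂)/Γ(α̂), where Γ is the real Gamma function and Γ' its derivative. -/
/-- The probability density of the `Gamma(a, β)` distribution (shape `a`, rate `β`):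
`f(x) = (β^a / Γ(a)) x^(a-1) e^(-βx)` for `x > 0` and `0` otherwise. -/
noncomputable def gammaDensity (a β x : ℝ) : ℝ :=
  if 0 < x then β ^ a / Real.Gamma a * x ^ (a - 1) * Real.exp (-(β * x)) else 0

section Aux

open Real MeasureTheory Set Filter Asymptotics Topology

lemma complex_integrand_eq {a : ℝ} {t : ℝ} (ht : 0 < t) :
    (t : ℂ) ^ ((a : ℂ) - 1) * (Real.log t * Real.exp (-t)) =
      ((t ^ (a - 1) * (Real.log t * Real.exp (-t)) : ℝ) : ℂ) := by
  rw [show ((a : ℂ) - 1) = ((a - 1 : ℝ) : ℂ) by push_cast; ring,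
    ← Complex.ofReal_cpow ht.le]
  push_cast
  ring

lemma integrableOn_log_gamma {a : ℝ} (ha : 0 < a) :
    IntegrableOn (fun t : ℝ => t ^ (a - 1) * (Real.log t * Real.exp (-t))) (Ioi 0) := by
  have h := (mellin_hasDerivAt_of_isBigO_rpow (E := ℂ) (a := a + 1) (b := 0)
      (f := fun x : ℝ => (Real.exp (-x) : ℂ)) (s := (a : ℂ))
      ((Complex.continuous_ofReal.comp
        (Real.continuous_exp.comp continuous_neg)).continuousOn.locallyIntegrableOn
        measurableSet_Ioi)
      (by
        rw [← isBigO_norm_left]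
        simp_rw [Complex.norm_real, isBigO_norm_left]
        simpa only [neg_one_mul] using
          (isLittleO_exp_neg_mul_rpow_atTop zero_lt_one _).isBigO)
      (by simpa using lt_add_one a)
      (by
        simp_rw [neg_zero, rpow_zero]
        refine isBigO_const_of_tendsto (?_ : Tendsto _ _ (𝓝 (1 : ℂ))) one_ne_zero
        rw [(by simp : (1 : ℂ) = Real.exp (-0))]
        exact (Complex.continuous_ofReal.comp
          (Real.continuous_exp.comp continuous_neg)).continuousWithinAt)
      (by simpa using ha)).1
  have h' : Integrable (fun t : ℝ =>
      ((t : ℂ) ^ ((a : ℂ) - 1) * (Real.log t * Real.exp (-t))).re)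
      (volume.restrict (Ioi 0)) := by
    have := h.re
    refine this.congr ?_
    filter_upwards with t
    simp [smul_eq_mul, mul_comm, mul_assoc, mul_left_comm]
  refine h'.congr ?_
  filter_upwards [ae_restrict_mem measurableSet_Ioi] with t ht
  rw [complex_integrand_eq ht, Complex.ofReal_re]

lemma hasDerivAt_realGamma {a : ℝ} (ha : 0 < a) :
    HasDerivAt Real.Gamma (∫ t in Ioi (0:ℝ), t ^ (a - 1) * (Real.log t * Real.exp (-t))) a := by
  have h1 : HasDerivAt Complex.GammaIntegral
      (∫ t in Ioi (0:ℝ), (t : ℂ) ^ ((a : ℂ) - 1) * (Real.log t * Real.exp (-t))) (a : ℂ) :=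
    Complex.hasDerivAt_GammaIntegral (by simpa using ha)
  have h2 : HasDerivAt Complex.Gamma
      (∫ t in Ioi (0:ℝ), (t : ℂ) ^ ((a : ℂ) - 1) * (Real.log t * Real.exp (-t))) (a : ℂ) := by
    refine h1.congr_of_eventuallyEq ?_
    filter_upwards [IsOpen.mem_nhds (isOpen_lt continuous_const Complex.continuous_re)
      (by simpa using ha : (a:ℂ) ∈ {s : ℂ | 0 < s.re})] with s hs
    exact Complex.Gamma_eq_integral hs
  have hval : (∫ t in Ioi (0:ℝ), (t : ℂ) ^ ((a : ℂ) - 1) * (Real.log t * Real.exp (-t)))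
      = ((∫ t in Ioi (0:ℝ), t ^ (a - 1) * (Real.log t * Real.exp (-t)) : ℝ) : ℂ) := by
    rw [setIntegral_congr_fun measurableSet_Ioi fun t ht => complex_integrand_eq ht]
    exact integral_ofReal
  rw [hval] at h2
  have h3 := h2.real_of_complex
  simp only [Complex.ofReal_re] at h3
  refine h3.congr_of_eventuallyEq ?_
  filter_upwards with x
  rw [Complex.Gamma_ofReal, Complex.ofReal_re]

lemma integrableOn_gamma_rate {a β : ℝ} (ha : 0 < a) (hβ : 0 < β) :
    IntegrableOn (fun x : ℝ => x ^ (a - 1) * Real.exp (-(β * x))) (Ioi 0) := by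
  have h0 : IntegrableOn (fun t : ℝ => Real.exp (-t) * t ^ (a - 1)) (Ioi 0) :=
    Real.GammaIntegral_convergent ha
  have h1 : IntegrableOn (fun x : ℝ => Real.exp (-(β * x)) * (β * x) ^ (a - 1)) (Ioi 0) := by
    have := (integrableOn_Ioi_comp_mul_left_iff
      (fun t : ℝ => Real.exp (-t) * t ^ (a - 1)) 0 hβ).mpr (by simpa using h0)
    simpa using this
  refine ((h1.const_mul ((β ^ (a - 1) : ℝ)⁻¹)).congr ?_)
  filter_upwards [ae_restrict_mem measurableSet_Ioi] with x hx
  rw [Real.mul_rpow hβ.le (le_of_lt hx)]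
  field_simp [(Real.rpow_pos_of_pos hβ (a-1)).ne']

lemma integrableOn_gamma_rate_log {a β : ℝ} (ha : 0 < a) (hβ : 0 < β) :
    IntegrableOn (fun x : ℝ => x ^ (a - 1) * Real.exp (-(β * x)) * Real.log x) (Ioi 0) := by
  have h0 : IntegrableOn
      (fun t : ℝ => t ^ (a - 1) * Real.exp (-t) * (Real.log t - Real.log β)) (Ioi 0) := by
    have h1 := integrableOn_log_gamma ha
    have h2 : IntegrableOn (fun t : ℝ => Real.exp (-t) * t ^ (a - 1)) (Ioi 0) :=
      Real.GammaIntegral_convergent ha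
    refine (h1.sub (h2.const_mul (Real.log β))).congr ?_
    filter_upwards with t
    simp only [Pi.sub_apply]
    ring
  have h1 : IntegrableOn
      (fun x : ℝ => (β * x) ^ (a - 1) * Real.exp (-(β * x)) *
        (Real.log (β * x) - Real.log β)) (Ioi 0) := by
    have := (integrableOn_Ioi_comp_mul_left_iff
      (fun t : ℝ => t ^ (a - 1) * Real.exp (-t) * (Real.log t - Real.log β)) 0 hβ).mpr
      (by simpa using h0)
    simpa using this
  refine ((h1.const_mul ((β ^ (a - 1) : ℝ)⁻¹)).congr ?_)
  filter_upwards [ae_restrict_mem measurableSet_Ioi] with x hx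
  rw [Real.mul_rpow hβ.le (le_of_lt hx), Real.log_mul hβ.ne' (ne_of_gt hx)]
  field_simp [(Real.rpow_pos_of_pos hβ (a-1)).ne']
  ring

lemma integral_gamma_rate {a β : ℝ} (ha : 0 < a) (hβ : 0 < β) :
    ∫ x in Ioi (0:ℝ), x ^ (a - 1) * Real.exp (-(β * x)) =
      β ^ (-a) * Real.Gamma a := by
  rw [Real.integral_rpow_mul_exp_neg_mul_Ioi ha hβ, one_div, Real.inv_rpow hβ.le,
    ← Real.rpow_neg hβ.le]

lemma integral_gamma_rate_log {a β : ℝ} (ha : 0 < a) (hβ : 0 < β) :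
    ∫ x in Ioi (0:ℝ), x ^ (a - 1) * Real.exp (-(β * x)) * Real.log x =
      β ^ (-a) * (deriv Real.Gamma a - Real.Gamma a * Real.log β) := by
  have key := MeasureTheory.integral_comp_mul_left_Ioi
    (fun t : ℝ => t ^ (a - 1) * Real.exp (-t) * (Real.log t - Real.log β)) 0 hβ
  rw [mul_zero] at key
  have lhs_eq : (∫ x in Ioi (0:ℝ), (β * x) ^ (a - 1) * Real.exp (-(β * x)) *
      (Real.log (β * x) - Real.log β))
      = β ^ (a - 1) * ∫ x in Ioi (0:ℝ), x ^ (a - 1) * Real.exp (-(β * x)) * Real.log x := by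
    rw [← integral_const_mul]
    refine setIntegral_congr_fun measurableSet_Ioi fun x hx => ?_
    have hx' : (0:ℝ) < x := hx
    rw [Real.mul_rpow hβ.le hx'.le, Real.log_mul hβ.ne' hx'.ne']
    ring
  have rhs_eq : (∫ t in Ioi (0:ℝ), t ^ (a - 1) * Real.exp (-t) * (Real.log t - Real.log β))
      = deriv Real.Gamma a - Real.Gamma a * Real.log β := by
    have hD := (hasDerivAt_realGamma ha).deriv
    have h1 := integrableOn_log_gamma ha
    have h2 : IntegrableOn (fun t : ℝ => Real.exp (-t) * t ^ (a - 1)) (Ioi 0) :=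
      Real.GammaIntegral_convergent ha
    have split : (∫ t in Ioi (0:ℝ), t ^ (a - 1) * Real.exp (-t) * (Real.log t - Real.log β))
        = (∫ t in Ioi (0:ℝ), t ^ (a - 1) * (Real.log t * Real.exp (-t)))
          - Real.log β * ∫ t in Ioi (0:ℝ), Real.exp (-t) * t ^ (a - 1) := by
      rw [← integral_const_mul, ← integral_sub h1 (h2.const_mul (Real.log β))]
      refine setIntegral_congr_fun measurableSet_Ioi fun t _ => ?_
      ring
    rw [split, hD, ← Real.Gamma_eq_integral ha]
    ring
  rw [lhs_eq, rhs_eq, smul_eq_mul] at key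
  have hβa : (β:ℝ) ^ (a - 1) ≠ 0 := (Real.rpow_pos_of_pos hβ _).ne'
  rw [show (β:ℝ) ^ (-a) = (β ^ (a - 1))⁻¹ * β⁻¹ by
    rw [← Real.rpow_neg_one β, ← Real.rpow_neg hβ.le, ← Real.rpow_add hβ]
    congr 1
    ring]
  rw [mul_assoc, ← key, inv_mul_cancel_left₀ hβa]

end Aux

open Real MeasureTheory Set in
/-- KL divergence between two Gamma distributions with the same rate `β`:
`KL(Gamma(α̂, β) ∥ Gamma(α, β)) = log Γ(α) - log Γ(α̂) + (α̂ - α) Γ'(α̂)/Γ(α̂)`. -/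
theorem gamma_klDiv (αh α β : ℝ) (hαh : 0 < αh) (hα : 0 < α) (hβ : 0 < β) :
    ∫ x in Set.Ioi (0 : ℝ),
        gammaDensity αh β x * Real.log (gammaDensity αh β x / gammaDensity α β x) =
      Real.log (Real.Gamma α) - Real.log (Real.Gamma αh) +
        (αh - α) * (deriv Real.Gamma αh / Real.Gamma αh) := by
  have hΓh := Real.Gamma_pos_of_pos hαh
  have hΓa := Real.Gamma_pos_of_pos hα
  set cH := β ^ αh / Real.Gamma αh with hcHdef
  set cA := β ^ α / Real.Gamma α with hcAdef
  have hcH : 0 < cH := div_pos (Real.rpow_pos_of_pos hβ _) hΓh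
  have hcA : 0 < cA := div_pos (Real.rpow_pos_of_pos hβ _) hΓa
  set C := Real.log cH - Real.log cA with hCdef
  set k := αh - α with hkdef
  have step : ∀ x ∈ Ioi (0:ℝ),
      gammaDensity αh β x * Real.log (gammaDensity αh β x / gammaDensity α β x)
        = (cH * C) * (x ^ (αh - 1) * Real.exp (-(β * x)))
          + (cH * k) * (x ^ (αh - 1) * Real.exp (-(β * x)) * Real.log x) := by
    intro x hx
    have hx' : (0:ℝ) < x := hx
    have hgH : gammaDensity αh β x = cH * x ^ (αh - 1) * Real.exp (-(β * x)) := if_pos hx'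
    have hgA : gammaDensity α β x = cA * x ^ (α - 1) * Real.exp (-(β * x)) := if_pos hx'
    have hxp : (0:ℝ) < x ^ (αh - 1) := Real.rpow_pos_of_pos hx' _
    have hxp' : (0:ℝ) < x ^ (α - 1) := Real.rpow_pos_of_pos hx' _
    have hlog : Real.log (gammaDensity αh β x / gammaDensity α β x)
        = C + k * Real.log x := by
      rw [hgH, hgA, Real.log_div (by positivity) (by positivity),
        Real.log_mul (by positivity) (Real.exp_ne_zero _),
        Real.log_mul hcH.ne' hxp.ne',
        Real.log_mul (by positivity) (Real.exp_ne_zero _),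
        Real.log_mul hcA.ne' hxp'.ne',
        Real.log_rpow hx', Real.log_rpow hx', Real.log_exp, hCdef, hkdef]
      ring
    rw [hlog, hgH]
    ring
  rw [setIntegral_congr_fun measurableSet_Ioi step,
    integral_add ((integrableOn_gamma_rate hαh hβ).const_mul _)
      ((integrableOn_gamma_rate_log hαh hβ).const_mul _),
    integral_const_mul, integral_const_mul, integral_gamma_rate hαh hβ,
    integral_gamma_rate_log hαh hβ]
  have hlogcH : Real.log cH = αh * Real.log β - Real.log (Real.Gamma αh) := by
    rw [hcHdef, Real.log_div (Real.rpow_pos_of_pos hβ _).ne' hΓh.ne', Real.log_rpow hβ]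
  have hlogcA : Real.log cA = α * Real.log β - Real.log (Real.Gamma α) := by
    rw [hcAdef, Real.log_div (Real.rpow_pos_of_pos hβ _).ne' hΓa.ne', Real.log_rpow hβ]
  rw [hCdef, hlogcH, hlogcA, hkdef, hcHdef, Real.rpow_neg hβ.le]
  have hb : (β:ℝ) ^ αh ≠ 0 := (Real.rpow_pos_of_pos hβ _).ne'
  field_simp
  ring
end
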